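/- Symmetry of H_I on finitely supported sequences: for all finitely supported a, b : ℕ → ℂ, Σ_n conj((H_I a) n) · (b n) = Σ_n conj(a n) · ((H_I b) n), where (H_I a) 0 = 0, (H_I a) 1 = Complex.I·(5/4)·a 2, and (H_I a) n = Complex.I·(n/2 + 3/4)·a (n+1) − Complex.I·(n/2 + 1/4)·a (n−1) for n ≥ 2. Thus H_I, with domain the finitely supported sequences in ℓ²(ℕ, ℂ), is a densely defined symmetric operator. -/
import Mathlib


/-- The operator H_I in the spin-network basis: (H_I a) 0 = 0,
(H_I a) 1 = i·(5/4)·a 2, (H_I a) n = i·(n/2 + 3/4)·a(n+1) − i·(n/2 + 1/4)·a(n−1) for n ≥ 2. -/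
noncomputable def HI (a : ℕ → ℂ) (n : ℕ) : ℂ :=
  if n = 0 then 0
  else if n = 1 then Complex.I * (5 / 4) * a 2
  else Complex.I * ((n : ℂ) / 2 + 3 / 4) * a (n + 1) -
        Complex.I * ((n : ℂ) / 2 + 1 / 4) * a (n - 1)

lemma HI_key (a b : ℕ → ℂ) (N : ℕ) :
    ∑ n ∈ Finset.range (N + 2),
      ((starRingEnd ℂ) (HI a n) * b n - (starRingEnd ℂ) (a n) * HI b n) =
    -(Complex.I * (((N : ℂ) + 2) / 2 + 1 / 4) *
      ((starRingEnd ℂ) (a (N + 1)) * b (N + 2) +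
        (starRingEnd ℂ) (a (N + 2)) * b (N + 1))) := by
  induction N with
  | zero =>
      simp only [Finset.sum_range_succ, Finset.sum_range_zero, HI]
      norm_num [map_mul, map_div₀, Complex.conj_I, map_ofNat]
      ring
  | succ n ih =>
      rw [show n + 1 + 2 = (n + 2) + 1 from rfl, Finset.sum_range_succ, ih]
      have h2 : ¬ (n + 2 = 0) := by omega
      have h3 : ¬ (n + 2 = 1) := by omega
      simp only [HI, if_neg h2, if_neg h3, Nat.add_sub_cancel]
      simp only [map_sub, map_mul, map_add, map_div₀, Complex.conj_I, map_natCast,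
        map_ofNat, map_one]
      push_cast
      ring

/-- Symmetry of H_I on finitely supported sequences:
Σ_n conj((H_I a) n)·(b n) = Σ_n conj(a n)·((H_I b) n). -/
theorem HI_symmetric (a b : ℕ → ℂ)
    (ha : (Function.support a).Finite) (hb : (Function.support b).Finite) :
    ∑' n : ℕ, (starRingEnd ℂ) (HI a n) * b n =
      ∑' n : ℕ, (starRingEnd ℂ) (a n) * HI b n := by
  obtain ⟨K, hK⟩ := (ha.union hb).bddAbove
  have hza : ∀ n, K < n → a n = 0 := by
    intro n hn
    by_contra h
    exact absurd (hK (Set.mem_union_left _ h)) (by omega)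
  have hzb : ∀ n, K < n → b n = 0 := by
    intro n hn
    by_contra h
    exact absurd (hK (Set.mem_union_right _ h)) (by omega)
  have hL : ∑' n : ℕ, (starRingEnd ℂ) (HI a n) * b n =
      ∑ n ∈ Finset.range (K + 3), (starRingEnd ℂ) (HI a n) * b n := by
    refine tsum_eq_sum ?_
    intro n hn
    rw [hzb n (by simpa using hn |> fun h => by simp [Finset.mem_range] at hn; omega), mul_zero]
  have hR : ∑' n : ℕ, (starRingEnd ℂ) (a n) * HI b n =
      ∑ n ∈ Finset.range (K + 3), (starRingEnd ℂ) (a n) * HI b n := by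
    refine tsum_eq_sum ?_
    intro n hn
    simp only [Finset.mem_range, not_lt] at hn
    rw [hza n (by omega), map_zero, zero_mul]
  rw [hL, hR]
  have key := HI_key a b (K + 1)
  rw [hza (K + 1 + 1) (by omega), hza (K + 1 + 2) (by omega),
    hzb (K + 1 + 1) (by omega), hzb (K + 1 + 2) (by omega)] at key
  simp only [map_zero, zero_mul, mul_zero, add_zero, mul_zero, neg_zero] at key
  have : ∑ n ∈ Finset.range (K + 3),
      ((starRingEnd ℂ) (HI a n) * b n - (starRingEnd ℂ) (a n) * HI b n) = 0 := by
    rw [show K + 3 = (K + 1) + 2 from rfl]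
    exact key
  rw [Finset.sum_sub_distrib] at this
  exact sub_eq_zero.mp this
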